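/- arXiv:2212.04680 — 9 statements merged into one kernel-verified Lean document; each statement's English description precedes it below -/
import Mathlib

section
/- Let S be a nonempty finite set, let H ≥ 0 be a real number, let p, q : S → ℝ be probability vectors, and let V : S → ℝ satisfy |V(s)| ≤ H for all s ∈ S. Then |√(Var_p(V)) − √(Var_q(V))| ≤ √3 · H · √(Σ_{s∈S} |p(s) − q(s)|). -/
private lemma sqrt_le_sqrt_add_sqrt_abs (a b : ℝ) :
    Real.sqrt a ≤ Real.sqrt b + Real.sqrt |a - b| := by
  rcases le_or_gt b 0 with hb | hb
  · have : a ≤ |a - b| := by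
      cases abs_cases (a - b) with
      | inl h => linarith [h.1]
      | inr h => nlinarith [h.1, Real.sqrt_nonneg a]
    calc Real.sqrt a ≤ Real.sqrt |a - b| := Real.sqrt_le_sqrt this
      _ ≤ Real.sqrt b + Real.sqrt |a - b| := le_add_of_nonneg_left (Real.sqrt_nonneg b)
  · have h1 : a ≤ b + |a - b| := by cases abs_cases (a - b) with
      | inl h => linarith [h.1]
      | inr h => linarith [h.1, abs_nonneg (a - b)]
    have h2 : Real.sqrt a ≤ Real.sqrt (b + |a - b|) := Real.sqrt_le_sqrt h1
    have h3 : Real.sqrt (b + |a - b|) ≤ Real.sqrt b + Real.sqrt |a - b| := by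
      have hle : b + |a - b| ≤ (Real.sqrt b + Real.sqrt |a - b|) ^ 2 := by
        nlinarith [Real.sq_sqrt hb.le, Real.sq_sqrt (abs_nonneg (a - b)),
          Real.sqrt_nonneg b, Real.sqrt_nonneg |a - b|]
      calc Real.sqrt (b + |a - b|) ≤ Real.sqrt ((Real.sqrt b + Real.sqrt |a - b|) ^ 2) :=
            Real.sqrt_le_sqrt hle
        _ = Real.sqrt b + Real.sqrt |a - b| := Real.sqrt_sq (by positivity)
    exact h2.trans h3

private lemma abs_sqrt_sub_sqrt_le (a b : ℝ) :
    |Real.sqrt a - Real.sqrt b| ≤ Real.sqrt |a - b| := by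
  rw [abs_sub_le_iff]
  constructor
  · have := sqrt_le_sqrt_add_sqrt_abs a b; linarith
  · have := sqrt_le_sqrt_add_sqrt_abs b a
    rw [abs_sub_comm] at this; linarith

/-- Variance-perturbation lemma (Lemma C.5 of Qiao–Wang / Lemma B.6):
for probability vectors `p, q` on a nonempty finite set and `V` bounded by `H`,
the standard deviations differ by at most `√3 · H · √‖p - q‖₁`. -/
theorem variance_perturbation_sqrt3
    {S : Type*} [Fintype S] [Nonempty S] (H : ℝ) (hH : 0 ≤ H)
    (p q V : S → ℝ)
    (hp_nonneg : ∀ s, 0 ≤ p s) (hp_sum : ∑ s, p s = 1)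
    (hq_nonneg : ∀ s, 0 ≤ q s) (hq_sum : ∑ s, q s = 1)
    (hV : ∀ s, |V s| ≤ H) :
    |Real.sqrt ((∑ s, p s * V s ^ 2) - (∑ s, p s * V s) ^ 2) -
      Real.sqrt ((∑ s, q s * V s ^ 2) - (∑ s, q s * V s) ^ 2)| ≤
      Real.sqrt 3 * H * Real.sqrt (∑ s, |p s - q s|) := by
  set Δ := ∑ s, |p s - q s| with hΔdef
  have hΔ : 0 ≤ Δ := Finset.sum_nonneg fun s _ => abs_nonneg _
  -- bound on first moments
  have hmom : ∀ (r : S → ℝ), (∀ s, 0 ≤ r s) → (∑ s, r s = 1) → |∑ s, r s * V s| ≤ H := by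
    intro r hr hrsum
    calc |∑ s, r s * V s| ≤ ∑ s, |r s * V s| := Finset.abs_sum_le_sum_abs _ _
      _ ≤ ∑ s, r s * H := by
          apply Finset.sum_le_sum
          intro s _
          rw [abs_mul, abs_of_nonneg (hr s)]
          exact mul_le_mul_of_nonneg_left (hV s) (hr s)
      _ = H := by rw [← Finset.sum_mul, hrsum, one_mul]
  have hp1 := hmom p hp_nonneg hp_sum
  have hq1 := hmom q hq_nonneg hq_sum
  -- bound on difference of first moments
  have hd1 : |(∑ s, p s * V s) - (∑ s, q s * V s)| ≤ H * Δ := by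
    rw [← Finset.sum_sub_distrib]
    calc |∑ s, (p s * V s - q s * V s)| ≤ ∑ s, |p s * V s - q s * V s| :=
          Finset.abs_sum_le_sum_abs _ _
      _ ≤ ∑ s, H * |p s - q s| := by
          apply Finset.sum_le_sum
          intro s _
          rw [← sub_mul, abs_mul, mul_comm]
          exact mul_le_mul_of_nonneg_right (hV s) (abs_nonneg _)
      _ = H * Δ := by rw [← Finset.mul_sum]
  -- bound on difference of second moments
  have hd2 : |(∑ s, p s * V s ^ 2) - (∑ s, q s * V s ^ 2)| ≤ H ^ 2 * Δ := by
    rw [← Finset.sum_sub_distrib]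
    calc |∑ s, (p s * V s ^ 2 - q s * V s ^ 2)| ≤ ∑ s, |p s * V s ^ 2 - q s * V s ^ 2| :=
          Finset.abs_sum_le_sum_abs _ _
      _ ≤ ∑ s, H ^ 2 * |p s - q s| := by
          apply Finset.sum_le_sum
          intro s _
          rw [← sub_mul, abs_mul, mul_comm]
          apply mul_le_mul_of_nonneg_right _ (abs_nonneg _)
          rw [abs_pow]
          exact pow_le_pow_left₀ (abs_nonneg _) (hV s) 2
      _ = H ^ 2 * Δ := by rw [← Finset.mul_sum]
  -- bound on difference of variances
  have hvar : |((∑ s, p s * V s ^ 2) - (∑ s, p s * V s) ^ 2) -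
      ((∑ s, q s * V s ^ 2) - (∑ s, q s * V s) ^ 2)| ≤ 3 * H ^ 2 * Δ := by
    set x := ∑ s, p s * V s
    set y := ∑ s, q s * V s
    set a := ∑ s, p s * V s ^ 2
    set b := ∑ s, q s * V s ^ 2
    have hxy : |x ^ 2 - y ^ 2| ≤ 2 * H ^ 2 * Δ := by
      have : x ^ 2 - y ^ 2 = (x - y) * (x + y) := by ring
      rw [this, abs_mul]
      have h1 : |x + y| ≤ 2 * H := (abs_add_le x y).trans (by linarith)
      calc |x - y| * |x + y| ≤ (H * Δ) * (2 * H) :=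
            mul_le_mul hd1 h1 (abs_nonneg _) (by positivity)
        _ = 2 * H ^ 2 * Δ := by ring
    calc |a - x ^ 2 - (b - y ^ 2)| = |(a - b) + (y ^ 2 - x ^ 2)| := by ring_nf
      _ ≤ |a - b| + |y ^ 2 - x ^ 2| := abs_add_le _ _
      _ ≤ H ^ 2 * Δ + 2 * H ^ 2 * Δ := by
          rw [abs_sub_comm] at hxy; exact add_le_add hd2 hxy
      _ = 3 * H ^ 2 * Δ := by ring
  calc |Real.sqrt ((∑ s, p s * V s ^ 2) - (∑ s, p s * V s) ^ 2) -
        Real.sqrt ((∑ s, q s * V s ^ 2) - (∑ s, q s * V s) ^ 2)| ≤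
      Real.sqrt |((∑ s, p s * V s ^ 2) - (∑ s, p s * V s) ^ 2) -
        ((∑ s, q s * V s ^ 2) - (∑ s, q s * V s) ^ 2)| := abs_sqrt_sub_sqrt_le _ _
    _ ≤ Real.sqrt (3 * H ^ 2 * Δ) := Real.sqrt_le_sqrt hvar
    _ = Real.sqrt 3 * H * Real.sqrt Δ := by
        rw [Real.sqrt_mul (by positivity), Real.sqrt_mul (by norm_num),
          Real.sqrt_sq hH]
end

section
/- Let S be a nonempty finite set, let H ≥ 0 and c ≥ 0 be real numbers, let p, q : S → ℝ be probability vectors with Σ_{s∈S} |p(s) − q(s)| ≤ 2c, and let V : S → ℝ satisfy |V(s)| ≤ H for all s ∈ S. Then |√(Var_p(V)) − √(Var_q(V))| ≤ 3·H·√c. -/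
lemma sqrt_subadd (x y : ℝ) (hx : 0 ≤ x) (hy : 0 ≤ y) :
    Real.sqrt (x + y) ≤ Real.sqrt x + Real.sqrt y := by
  have h : x + y ≤ (Real.sqrt x + Real.sqrt y) ^ 2 := by
    have hx' := Real.sq_sqrt hx
    have hy' := Real.sq_sqrt hy
    have h2 : 0 ≤ 2 * Real.sqrt x * Real.sqrt y := by positivity
    nlinarith
  calc Real.sqrt (x + y) ≤ Real.sqrt ((Real.sqrt x + Real.sqrt y) ^ 2) :=
        Real.sqrt_le_sqrt h
    _ = Real.sqrt x + Real.sqrt y := Real.sqrt_sq (by positivity)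

lemma abs_sqrt_sub_sqrt (a b : ℝ) (ha : 0 ≤ a) (hb : 0 ≤ b) :
    |Real.sqrt a - Real.sqrt b| ≤ Real.sqrt |a - b| := by
  wlog h : b ≤ a generalizing a b
  · rw [abs_sub_comm, abs_sub_comm a b]
    exact this b a hb ha (le_of_not_ge h)
  · have h1 : Real.sqrt a ≤ Real.sqrt b + Real.sqrt (a - b) := by
      calc Real.sqrt a = Real.sqrt (b + (a - b)) := by ring_nf
        _ ≤ Real.sqrt b + Real.sqrt (a - b) := sqrt_subadd _ _ hb (by linarith)
    have h2 : Real.sqrt b ≤ Real.sqrt a := Real.sqrt_le_sqrt h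
    rw [abs_of_nonneg (by linarith), abs_of_nonneg (by linarith)]
    linarith

/-- Second display of the paper's Lemma B.6: if `‖p - q‖₁ ≤ 2c` and `|V| ≤ H`,
then the standard deviations under `p` and `q` differ by at most `3·H·√c`. -/
theorem variance_perturbation_three_H_sqrt_c
    {S : Type*} [Fintype S] [Nonempty S] (H c : ℝ) (hH : 0 ≤ H) (hc : 0 ≤ c)
    (p q V : S → ℝ)
    (hp_nonneg : ∀ s, 0 ≤ p s) (hp_sum : ∑ s, p s = 1)
    (hq_nonneg : ∀ s, 0 ≤ q s) (hq_sum : ∑ s, q s = 1)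
    (hpq : ∑ s, |p s - q s| ≤ 2 * c)
    (hV : ∀ s, |V s| ≤ H) :
    |Real.sqrt ((∑ s, p s * V s ^ 2) - (∑ s, p s * V s) ^ 2) -
      Real.sqrt ((∑ s, q s * V s ^ 2) - (∑ s, q s * V s) ^ 2)| ≤
      3 * H * Real.sqrt c := by
  -- variance nonnegativity via Cauchy-Schwarz
  have var_nonneg : ∀ (r : S → ℝ), (∀ s, 0 ≤ r s) → (∑ s, r s = 1) →
      (∑ s, r s * V s) ^ 2 ≤ ∑ s, r s * V s ^ 2 := by
    intro r hr hrs
    have key : (∑ s, r s * V s) ^ 2 ≤ (∑ s, r s) * (∑ s, r s * V s ^ 2) := by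
      have := Finset.sum_mul_sq_le_sq_mul_sq Finset.univ
        (fun s => Real.sqrt (r s)) (fun s => Real.sqrt (r s) * V s)
      have e1 : ∀ s : S, Real.sqrt (r s) * (Real.sqrt (r s) * V s) = r s * V s := by
        intro s
        rw [← mul_assoc, Real.mul_self_sqrt (hr s)]
      have e2 : ∀ s : S, Real.sqrt (r s) ^ 2 = r s := fun s => Real.sq_sqrt (hr s)
      have e3 : ∀ s : S, (Real.sqrt (r s) * V s) ^ 2 = r s * V s ^ 2 := by
        intro s; rw [mul_pow, Real.sq_sqrt (hr s)]
      simp only [e1, e2, e3] at this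
      exact this
    rw [hrs, one_mul] at key
    exact key
  set a := (∑ s, p s * V s ^ 2) - (∑ s, p s * V s) ^ 2 with ha_def
  set b := (∑ s, q s * V s ^ 2) - (∑ s, q s * V s) ^ 2 with hb_def
  have ha : 0 ≤ a := sub_nonneg.mpr (var_nonneg p hp_nonneg hp_sum)
  have hb : 0 ≤ b := sub_nonneg.mpr (var_nonneg q hq_nonneg hq_sum)
  -- bound |a - b|
  have hb1 : |∑ s, (p s - q s) * V s ^ 2| ≤ 2 * c * H ^ 2 := by
    calc |∑ s, (p s - q s) * V s ^ 2| ≤ ∑ s, |(p s - q s) * V s ^ 2| :=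
          Finset.abs_sum_le_sum_abs _ _
      _ ≤ ∑ s, |p s - q s| * H ^ 2 := by
          apply Finset.sum_le_sum
          intro s _
          rw [abs_mul]
          apply mul_le_mul_of_nonneg_left _ (abs_nonneg _)
          rw [abs_pow]
          exact pow_le_pow_left₀ (abs_nonneg _) (hV s) 2
      _ = (∑ s, |p s - q s|) * H ^ 2 := by rw [Finset.sum_mul]
      _ ≤ 2 * c * H ^ 2 := by
          apply mul_le_mul_of_nonneg_right hpq (by positivity)
  have hmean : ∀ (r : S → ℝ), (∀ s, 0 ≤ r s) → (∑ s, r s = 1) →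
      |∑ s, r s * V s| ≤ H := by
    intro r hr hrs
    calc |∑ s, r s * V s| ≤ ∑ s, |r s * V s| := Finset.abs_sum_le_sum_abs _ _
      _ ≤ ∑ s, r s * H := by
          apply Finset.sum_le_sum
          intro s _
          rw [abs_mul, abs_of_nonneg (hr s)]
          exact mul_le_mul_of_nonneg_left (hV s) (hr s)
      _ = H := by rw [← Finset.sum_mul, hrs, one_mul]
  have hmp := hmean p hp_nonneg hp_sum
  have hmq := hmean q hq_nonneg hq_sum
  have hdiff : |(∑ s, p s * V s) - (∑ s, q s * V s)| ≤ 2 * c * H := by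
    have : (∑ s, p s * V s) - (∑ s, q s * V s) = ∑ s, (p s - q s) * V s := by
      rw [← Finset.sum_sub_distrib]; congr 1; ext s; ring
    rw [this]
    calc |∑ s, (p s - q s) * V s| ≤ ∑ s, |(p s - q s) * V s| :=
          Finset.abs_sum_le_sum_abs _ _
      _ ≤ ∑ s, |p s - q s| * H := by
          apply Finset.sum_le_sum
          intro s _
          rw [abs_mul]
          exact mul_le_mul_of_nonneg_left (hV s) (abs_nonneg _)
      _ = (∑ s, |p s - q s|) * H := by rw [Finset.sum_mul]
      _ ≤ 2 * c * H := mul_le_mul_of_nonneg_right hpq hH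
  have hsq : |(∑ s, p s * V s) ^ 2 - (∑ s, q s * V s) ^ 2| ≤ 4 * c * H ^ 2 := by
    have factored : (∑ s, p s * V s) ^ 2 - (∑ s, q s * V s) ^ 2 =
        ((∑ s, p s * V s) - (∑ s, q s * V s)) * ((∑ s, p s * V s) + (∑ s, q s * V s)) := by
      ring
    rw [factored, abs_mul]
    have hsum : |(∑ s, p s * V s) + (∑ s, q s * V s)| ≤ 2 * H := by
      calc |(∑ s, p s * V s) + (∑ s, q s * V s)| ≤ _ + _ := abs_add_le _ _
        _ ≤ 2 * H := by linarith
    calc |(∑ s, p s * V s) - (∑ s, q s * V s)| * |(∑ s, p s * V s) + (∑ s, q s * V s)|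
        ≤ (2 * c * H) * (2 * H) := by
          apply mul_le_mul hdiff hsum (abs_nonneg _) (by positivity)
      _ = 4 * c * H ^ 2 := by ring
  have hab : |a - b| ≤ 9 * c * H ^ 2 := by
    have ha_b : a - b = (∑ s, (p s - q s) * V s ^ 2) -
        ((∑ s, p s * V s) ^ 2 - (∑ s, q s * V s) ^ 2) := by
      rw [ha_def, hb_def]
      have e : ∑ s, (p s - q s) * V s ^ 2 =
          (∑ s, p s * V s ^ 2) - ∑ s, q s * V s ^ 2 := by
        rw [← Finset.sum_sub_distrib]; congr 1; ext s; ring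
      rw [e]; ring
    rw [ha_b]
    calc |_ - _| ≤ |∑ s, (p s - q s) * V s ^ 2| +
          |(∑ s, p s * V s) ^ 2 - (∑ s, q s * V s) ^ 2| := abs_sub _ _
      _ ≤ 2 * c * H ^ 2 + 4 * c * H ^ 2 := add_le_add hb1 hsq
      _ ≤ 9 * c * H ^ 2 := by nlinarith
  calc |Real.sqrt a - Real.sqrt b| ≤ Real.sqrt |a - b| := abs_sqrt_sub_sqrt a b ha hb
    _ ≤ Real.sqrt (9 * c * H ^ 2) := Real.sqrt_le_sqrt hab
    _ = 3 * H * Real.sqrt c := by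
        rw [show (9 : ℝ) * c * H ^ 2 = (3 * H) ^ 2 * c by ring,
          Real.sqrt_mul (by positivity), Real.sqrt_sq (by positivity)]
end

section
/- Let S be a nonempty finite set of cardinality S₀ ≥ 1 and let E > 0. Let n : S → ℝ satisfy n(s) ≥ 0 for all s, and set N = Σ_{s∈S} n(s). Let n̂ : S → ℝ and N̂ ∈ ℝ satisfy |n̂(s) − n(s)| ≤ E/4 for all s and |N̂ − N| ≤ E/4. Call a vector x : S → ℝ feasible if x(s) ≥ 0 for all s and |Σ_{s∈S} x(s) − N̂| ≤ E/4. Suppose x is feasible and minimizes max_{s∈S} |x(s) − n̂(s)| over all feasible vectors. Define ñ(s) = x(s) + E/(2S₀) for each s and Ñ = Σ_{s∈S} ñ(s). Then: (i) ñ(s) > 0 for all s; (ii) |ñ(s) − n(s)| ≤ E for all s; and (iii) N ≤ Ñ ≤ N + E. -/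
/-- Deterministic content of the post-processing step (Section 5.1.1, Lemma 5.2):
solving the LP `min_x max_s |x(s) − n̂(s)|` over feasible vectors and inflating each
coordinate by `E/(2S₀)` yields private counts that are strictly positive, entrywise
within `E` of the true counts, and whose total never underestimates the true total
while exceeding it by at most `E`. -/
theorem post_processing_counts
    {S : Type*} [Fintype S] [Nonempty S] (E : ℝ) (hE : 0 < E)
    (n nhat x : S → ℝ) (Nhat : ℝ)
    (hn_nonneg : ∀ s, 0 ≤ n s)
    (hnhat : ∀ s, |nhat s - n s| ≤ E / 4)
    (hNhat : |Nhat - ∑ s, n s| ≤ E / 4)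
    (hx_nonneg : ∀ s, 0 ≤ x s)
    (hx_sum : |(∑ s, x s) - Nhat| ≤ E / 4)
    (hx_min : ∀ y : S → ℝ, (∀ s, 0 ≤ y s) → |(∑ s, y s) - Nhat| ≤ E / 4 →
      (Finset.univ.sup' Finset.univ_nonempty fun s => |x s - nhat s|) ≤
        (Finset.univ.sup' Finset.univ_nonempty fun s => |y s - nhat s|)) :
    (∀ s, 0 < x s + E / (2 * (Fintype.card S : ℝ))) ∧
    (∀ s, |(x s + E / (2 * (Fintype.card S : ℝ))) - n s| ≤ E) ∧
    ((∑ s, n s) ≤ (∑ s, (x s + E / (2 * (Fintype.card S : ℝ)))) ∧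
      (∑ s, (x s + E / (2 * (Fintype.card S : ℝ)))) ≤ (∑ s, n s) + E) := by
  have hcard : (1 : ℝ) ≤ (Fintype.card S : ℝ) := by
    exact_mod_cast Fintype.card_pos
  have hcpos : (0 : ℝ) < (Fintype.card S : ℝ) := lt_of_lt_of_le one_pos hcard
  set d : ℝ := E / (2 * (Fintype.card S : ℝ)) with hd
  have hdpos : 0 < d := div_pos hE (by positivity)
  have hdle : d ≤ E / 2 := by
    rw [hd, div_le_div_iff₀ (by positivity) (by norm_num)]
    nlinarith
  -- n itself is feasible
  have hn_feas : |(∑ s, n s) - Nhat| ≤ E / 4 := by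
    rw [abs_sub_comm]; exact hNhat
  have hmin := hx_min n hn_nonneg hn_feas
  have hsupn : (Finset.univ.sup' Finset.univ_nonempty fun s => |n s - nhat s|) ≤ E / 4 := by
    apply Finset.sup'_le
    intro s _
    rw [abs_sub_comm]; exact hnhat s
  have hx_close : ∀ s, |x s - nhat s| ≤ E / 4 := by
    intro s
    calc |x s - nhat s| ≤ _ := Finset.le_sup' (f := fun s => |x s - nhat s|)
          (Finset.mem_univ s)
      _ ≤ _ := hmin
      _ ≤ E / 4 := hsupn
  have hxn : ∀ s, |x s - n s| ≤ E / 2 := by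
    intro s
    have := abs_sub_abs_le_abs_sub (x s - nhat s) (x s - n s)
    have h1 := hx_close s
    have h2 := hnhat s
    calc |x s - n s| = |(x s - nhat s) + (nhat s - n s)| := by ring_nf
      _ ≤ |x s - nhat s| + |nhat s - n s| := abs_add_le _ _
      _ ≤ E / 4 + E / 4 := add_le_add h1 h2
      _ = E / 2 := by ring
  refine ⟨fun s => ?_, fun s => ?_, ?_, ?_⟩
  · have := hx_nonneg s; linarith
  · have h := abs_le.mp (hxn s)
    rw [abs_le]
    constructor <;> [skip; skip] <;> nlinarith [h.1, h.2, hdle, hdpos]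
  · have h1 := abs_le.mp hx_sum
    have h2 := abs_le.mp hNhat
    have hsum : ∑ s, (x s + d) = (∑ s, x s) + (Fintype.card S : ℝ) * d := by
      rw [Finset.sum_add_distrib, Finset.sum_const, Finset.card_univ, nsmul_eq_mul]
    have hcd : (Fintype.card S : ℝ) * d = E / 2 := by
      rw [hd]; field_simp
    rw [hsum, hcd]; linarith [h1.1, h2.1]
  · have h1 := abs_le.mp hx_sum
    have h2 := abs_le.mp hNhat
    have hsum : ∑ s, (x s + d) = (∑ s, x s) + (Fintype.card S : ℝ) * d := by
      rw [Finset.sum_add_distrib, Finset.sum_const, Finset.card_univ, nsmul_eq_mul]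
    have hcd : (Fintype.card S : ℝ) * d = E / 2 := by
      rw [hd]; field_simp
    rw [hsum, hcd]; linarith [h1.2, h2.2]
end

section
/- Let r, N, Ñ, R, R̃, E, ι be real numbers with 0 ≤ r ≤ 1, 0 < N, N ≤ Ñ ≤ N + E, E ≥ 0, ι ≥ 0, |R̃ − R| ≤ E, and |R/N − r| ≤ √(2ι/N). Then |min(max(R̃/Ñ, 0), 1) − r| ≤ √(2ι/Ñ) + 2E/Ñ. -/
/-- Deterministic core of the paper's Lemma B.1: the clipped private empirical reward
`clip(R̃/Ñ, [0,1])` deviates from the true mean reward `r` by at most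
`√(2ι/Ñ) + 2E/Ñ`. -/
theorem private_reward_estimate
    (r N Ntil R Rtil E iota : ℝ)
    (hr0 : 0 ≤ r) (hr1 : r ≤ 1)
    (hN : 0 < N) (hNle : N ≤ Ntil) (hNub : Ntil ≤ N + E)
    (hE : 0 ≤ E) (hiota : 0 ≤ iota)
    (hR : |Rtil - R| ≤ E)
    (hconc : |R / N - r| ≤ Real.sqrt (2 * iota / N)) :
    |min (max (Rtil / Ntil) 0) 1 - r| ≤ Real.sqrt (2 * iota / Ntil) + 2 * E / Ntil := by
  have hNt : 0 < Ntil := lt_of_lt_of_le hN hNle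
  set x := Rtil / Ntil with hx
  -- clipping to [0,1] moves no further from r ∈ [0,1]
  have hclip : |min (max x 0) 1 - r| ≤ |x - r| := by
    rcases le_total x 0 with h | h
    · rw [max_eq_right h, min_eq_left (by norm_num : (0:ℝ) ≤ 1), zero_sub, abs_neg,
        abs_of_nonneg hr0]
      calc r ≤ r - x := by linarith
        _ ≤ |x - r| := by rw [abs_sub_comm]; exact le_abs_self _
    · rcases le_total x 1 with h2 | h2
      · rw [max_eq_left h, min_eq_left h2]
      · rw [max_eq_left h, min_eq_right h2, abs_of_nonneg (by linarith),
          abs_of_nonneg (by linarith)]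
        linarith
  refine hclip.trans ?_
  set s := Real.sqrt (2 * iota / Ntil) with hsdef
  set sN := Real.sqrt (2 * iota / N) with hsNdef
  have hs : 0 ≤ s := Real.sqrt_nonneg _
  have hsN : 0 ≤ sN := Real.sqrt_nonneg _
  have e1 : N * sN = Real.sqrt (2 * iota * N) := by
    rw [hsNdef, show 2 * iota * N = N ^ 2 * (2 * iota / N) by field_simp,
      Real.sqrt_mul (sq_nonneg N), Real.sqrt_sq hN.le]
  have e2 : Ntil * s = Real.sqrt (2 * iota * Ntil) := by
    rw [hsdef, show 2 * iota * Ntil = Ntil ^ 2 * (2 * iota / Ntil) by field_simp,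
      Real.sqrt_mul (sq_nonneg Ntil), Real.sqrt_sq hNt.le]
  have key : N * sN ≤ Ntil * s := by
    rw [e1, e2]
    exact Real.sqrt_le_sqrt (by nlinarith)
  rw [abs_le] at hconc hR
  have hRN : R / N * N = R := div_mul_cancel₀ R hN.ne'
  have upper : Rtil - r * Ntil ≤ Ntil * s + 2 * E := by
    nlinarith [hconc.2, hR.2, mul_le_mul_of_nonneg_right hconc.2 hN.le]
  have lower : -(Ntil * s + 2 * E) ≤ Rtil - r * Ntil := by
    nlinarith [hconc.1, hR.1, mul_le_mul_of_nonneg_right hconc.1 hN.le]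
  have h2E : 2 * E / Ntil * Ntil = 2 * E := div_mul_cancel₀ _ hNt.ne'
  have hxN : x * Ntil = Rtil := div_mul_cancel₀ Rtil hNt.ne'
  rw [abs_le]
  constructor
  · nlinarith [upper, mul_pos hNt hNt]
  · nlinarith [lower, mul_pos hNt hNt]
end

section
/- Let S be a nonempty finite set of cardinality S₀ ≥ 1 and let E ≥ 0, ι ≥ 0 be real numbers. Let n : S → ℝ satisfy n(s) ≥ 0 for all s with N = Σ_{s∈S} n(s) > 0, and let ñ : S → ℝ satisfy |ñ(s) − n(s)| ≤ E for all s; set Ñ = Σ_{s∈S} ñ(s) and assume N ≤ Ñ ≤ N + E. Let P : S → ℝ be a probability vector with Σ_{s∈S} |n(s)/N − P(s)| ≤ 2√(S₀·ι/N). Then Σ_{s∈S} |ñ(s)/Ñ − P(s)| ≤ 2√(S₀·ι/Ñ) + 2S₀·E/Ñ. -/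
/-- Deterministic core of the paper's Lemma B.2: the ℓ₁ error of the private empirical
transition kernel `ñ/Ñ` is at most `2√(S₀ι/Ñ) + 2S₀E/Ñ`, given the ℓ₁ concentration
of the non-private empirical kernel `n/N` and the accuracy of the private counts. -/
theorem private_kernel_l1_error
    {S : Type*} [Fintype S] [Nonempty S] (E iota : ℝ) (hE : 0 ≤ E) (hiota : 0 ≤ iota)
    (n ntil P : S → ℝ)
    (hn_nonneg : ∀ s, 0 ≤ n s)
    (hN_pos : 0 < ∑ s, n s)
    (hclose : ∀ s, |ntil s - n s| ≤ E)
    (hle : (∑ s, n s) ≤ ∑ s, ntil s)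
    (hub : (∑ s, ntil s) ≤ (∑ s, n s) + E)
    (hP_nonneg : ∀ s, 0 ≤ P s) (hP_sum : ∑ s, P s = 1)
    (hconc : ∑ s, |n s / (∑ t, n t) - P s| ≤
      2 * Real.sqrt ((Fintype.card S : ℝ) * iota / (∑ t, n t))) :
    ∑ s, |ntil s / (∑ t, ntil t) - P s| ≤
      2 * Real.sqrt ((Fintype.card S : ℝ) * iota / (∑ t, ntil t)) +
        2 * (Fintype.card S : ℝ) * E / (∑ t, ntil t) := by
  set N := ∑ s, n s with hN
  set Nt := ∑ s, ntil s with hNtdef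
  have hNt_pos : 0 < Nt := lt_of_lt_of_le hN_pos hle
  set x := (Fintype.card S : ℝ) * iota with hx
  have hx_nonneg : 0 ≤ x := by positivity
  have hcard : (1:ℝ) ≤ (Fintype.card S : ℝ) := by
    exact_mod_cast Fintype.card_pos
  -- rewrite LHS as a sum of |ntil s - Nt * P s| divided by Nt
  have key : ∑ s, |ntil s / Nt - P s| = (∑ s, |ntil s - Nt * P s|) / Nt := by
    rw [Finset.sum_div]
    refine Finset.sum_congr rfl fun s _ => ?_
    rw [show ntil s / Nt - P s = (ntil s - Nt * P s) / Nt by field_simp,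
      abs_div, abs_of_pos hNt_pos]
  have key2 : ∑ s, |n s - N * P s| = N * ∑ s, |n s / N - P s| := by
    rw [Finset.mul_sum]
    refine Finset.sum_congr rfl fun s _ => ?_
    rw [show n s / N - P s = (n s - N * P s) / N by field_simp,
      abs_div, abs_of_pos hN_pos, mul_div_cancel₀ _ hN_pos.ne']
  have h1 : ∑ s, |ntil s - Nt * P s| ≤
      (Fintype.card S : ℝ) * E + N * (2 * Real.sqrt (x / N)) + E := by
    have tri : ∀ s, |ntil s - Nt * P s| ≤
        |ntil s - n s| + |n s - N * P s| + |N * P s - Nt * P s| := by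
      intro s
      calc |ntil s - Nt * P s|
          = |(ntil s - n s) + (n s - N * P s) + (N * P s - Nt * P s)| := by ring_nf
        _ ≤ |ntil s - n s| + |n s - N * P s| + |N * P s - Nt * P s| := by
            exact (abs_add_le _ _).trans (add_le_add_left (abs_add_le _ _) _)
    calc ∑ s, |ntil s - Nt * P s|
        ≤ ∑ s, (|ntil s - n s| + |n s - N * P s| + |N * P s - Nt * P s|) :=
          Finset.sum_le_sum fun s _ => tri s
      _ = (∑ s, |ntil s - n s|) + (∑ s, |n s - N * P s|) + ∑ s, |N * P s - Nt * P s| := by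
          simp [Finset.sum_add_distrib]
      _ ≤ (Fintype.card S : ℝ) * E + N * (2 * Real.sqrt (x / N)) + E := by
          gcongr ?_ + ?_ + ?_
          · calc ∑ s, |ntil s - n s| ≤ ∑ _s : S, E :=
                Finset.sum_le_sum fun s _ => hclose s
              _ = (Fintype.card S : ℝ) * E := by simp [mul_comm]
          · rw [key2]
            exact mul_le_mul_of_nonneg_left hconc hN_pos.le
          · have : ∀ s, |N * P s - Nt * P s| = (Nt - N) * P s := by
              intro s
              rw [show N * P s - Nt * P s = -((Nt - N) * P s) by ring, abs_neg,
                abs_of_nonneg (by nlinarith [hP_nonneg s, hle])]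
            rw [Finset.sum_congr rfl fun s _ => this s, ← Finset.mul_sum, hP_sum, mul_one]
            linarith
  have hsq1 : N * (2 * Real.sqrt (x / N)) = 2 * Real.sqrt (x * N) := by
    rw [Real.sqrt_div hx_nonneg, Real.sqrt_mul hx_nonneg]
    rw [eq_comm, show Real.sqrt N = N / Real.sqrt N from (Real.div_sqrt).symm]
    field_simp
    linear_combination (-Real.sqrt x) * Real.mul_self_sqrt hN_pos.le
  have hsq2 : Real.sqrt (x * N) ≤ Real.sqrt (x * Nt) :=
    Real.sqrt_le_sqrt (by nlinarith)
  have hsq3 : Real.sqrt (x * Nt) / Nt = Real.sqrt (x / Nt) := by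
    rw [Real.sqrt_div hx_nonneg, Real.sqrt_mul hx_nonneg]
    rw [show Real.sqrt Nt = Nt / Real.sqrt Nt from (Real.div_sqrt).symm]
    field_simp
    rw [Real.sq_sqrt hNt_pos.le]
  rw [key]
  calc (∑ s, |ntil s - Nt * P s|) / Nt
      ≤ ((Fintype.card S : ℝ) * E + 2 * Real.sqrt (x * Nt) + E) / Nt := by
        refine (div_le_div_iff_of_pos_right hNt_pos).mpr ?_
        rw [hsq1] at h1
        linarith
    _ ≤ (2 * Real.sqrt (x * Nt) + 2 * (Fintype.card S : ℝ) * E) / Nt := by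
        refine (div_le_div_iff_of_pos_right hNt_pos).mpr ?_
        nlinarith
    _ = 2 * Real.sqrt (x / Nt) + 2 * (Fintype.card S : ℝ) * E / Nt := by
        rw [add_div, mul_div_assoc, hsq3, mul_div_assoc]
end

section
/- Let m, m̃, N, Ñ, p, E, ι be real numbers with 0 ≤ p ≤ 1, 0 ≤ m ≤ N, 0 < N ≤ Ñ ≤ N + E, |m̃ − m| ≤ E, E ≥ 1, ι ≥ 2, and |m/N − p| ≤ √(2pι/N) + 2ι/(3N). Then |m̃/Ñ − p| ≤ √(2pι/Ñ) + 2Eι/Ñ. -/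
/-- Deterministic core of the paper's Lemma B.3: a Bernstein-type deviation bound for
the private empirical probability `m̃/Ñ`. -/
theorem private_bernstein_probability
    (m mtil N Ntil p E iota : ℝ)
    (hp0 : 0 ≤ p) (hp1 : p ≤ 1)
    (hm0 : 0 ≤ m) (hmN : m ≤ N)
    (hN : 0 < N) (hNle : N ≤ Ntil) (hNub : Ntil ≤ N + E)
    (hmtil : |mtil - m| ≤ E)
    (hE : 1 ≤ E) (hiota : 2 ≤ iota)
    (hconc : |m / N - p| ≤ Real.sqrt (2 * p * iota / N) + 2 * iota / (3 * N)) :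
    |mtil / Ntil - p| ≤ Real.sqrt (2 * p * iota / Ntil) + 2 * E * iota / Ntil := by
  have hNt : 0 < Ntil := hN.trans_le hNle
  have hNne : N ≠ 0 := hN.ne'
  have hNtne : Ntil ≠ 0 := hNt.ne'
  have hiota0 : (0:ℝ) ≤ iota := by linarith
  have hpi0 : (0:ℝ) ≤ 2 * p * iota := by positivity
  -- Step 1: |m - N*p| ≤ √(2 p ι N) + 2ι/3
  have h2 : |m - N * p| ≤ Real.sqrt (2 * p * iota * N) + 2 * iota / 3 := by
    have h := mul_le_mul_of_nonneg_left hconc hN.le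
    have e1 : N * |m / N - p| = |m - N * p| := by
      rw [show m / N - p = (m - N * p) / N by field_simp, abs_div, abs_of_pos hN]
      field_simp
    have e2 : N * Real.sqrt (2 * p * iota / N) = Real.sqrt (2 * p * iota * N) := by
      rw [← Real.sqrt_sq hN.le, ← Real.sqrt_mul (sq_nonneg N)]
      congr 1
      field_simp
      rw [Real.sq_sqrt (sq_nonneg N)]
      ring
    have e3 : N * (2 * iota / (3 * N)) = 2 * iota / 3 := by
      field_simp
    calc |m - N * p| = N * |m / N - p| := e1.symm
      _ ≤ N * (Real.sqrt (2 * p * iota / N) + 2 * iota / (3 * N)) := h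
      _ = Real.sqrt (2 * p * iota * N) + 2 * iota / 3 := by rw [mul_add, e2, e3]
  -- Step 2: decomposition and triangle inequality
  have hdecomp : mtil / Ntil - p
      = ((mtil - m) + (m - N * p) + p * (N - Ntil)) / Ntil := by
    field_simp
    ring
  have h3 : |p * (N - Ntil)| ≤ E := by
    rw [abs_mul, abs_of_nonneg hp0, abs_of_nonpos (by linarith : N - Ntil ≤ 0)]
    nlinarith
  have habs : |(mtil - m) + (m - N * p) + p * (N - Ntil)|
      ≤ E + (Real.sqrt (2 * p * iota * N) + 2 * iota / 3) + E := by
    calc |(mtil - m) + (m - N * p) + p * (N - Ntil)|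
        ≤ |(mtil - m) + (m - N * p)| + |p * (N - Ntil)| := abs_add_le _ _
      _ ≤ (|mtil - m| + |m - N * p|) + |p * (N - Ntil)| := by
          gcongr; exact abs_add_le _ _
      _ ≤ E + (Real.sqrt (2 * p * iota * N) + 2 * iota / 3) + E := by
          gcongr
  have htri : |mtil / Ntil - p|
      ≤ (E + (Real.sqrt (2 * p * iota * N) + 2 * iota / 3) + E) / Ntil := by
    rw [hdecomp, abs_div, abs_of_pos hNt]
    gcongr
  -- Step 3: bound the sqrt term and final arithmetic
  have hsq : Real.sqrt (2 * p * iota * N) / Ntil ≤ Real.sqrt (2 * p * iota / Ntil) := by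
    have e : Real.sqrt (2 * p * iota * N / Ntil ^ 2)
        = Real.sqrt (2 * p * iota * N) / Ntil := by
      rw [Real.sqrt_div (by positivity), Real.sqrt_sq hNt.le]
    rw [← e]
    apply Real.sqrt_le_sqrt
    rw [div_le_div_iff₀ (by positivity) hNt]
    nlinarith [mul_nonneg (mul_nonneg hpi0 hNt.le) (by linarith : (0:ℝ) ≤ Ntil - N)]
  have harith : (2 * E + 2 * iota / 3) / Ntil ≤ 2 * E * iota / Ntil := by
    gcongr
    nlinarith [mul_nonneg (by linarith : (0:ℝ) ≤ E - 1) (by linarith : (0:ℝ) ≤ iota - 1)]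
  calc |mtil / Ntil - p|
      ≤ (E + (Real.sqrt (2 * p * iota * N) + 2 * iota / 3) + E) / Ntil := htri
    _ = Real.sqrt (2 * p * iota * N) / Ntil + (2 * E + 2 * iota / 3) / Ntil := by ring
    _ ≤ Real.sqrt (2 * p * iota / Ntil) + 2 * E * iota / Ntil := add_le_add hsq harith
end

section
/- Let S be a finite set of cardinality S₀ ≥ 2, and let H ≥ 0, E ≥ 1, ι ≥ 2, σ ≥ 0 be real numbers. Let V : S → ℝ satisfy 0 ≤ V(s) ≤ H for all s. Let n : S → ℝ satisfy n(s) ≥ 0 for all s with N = Σ_{s∈S} n(s) > 0, and let ñ : S → ℝ satisfy |ñ(s) − n(s)| ≤ E for all s; set Ñ = Σ_{s∈S} ñ(s) and assume N ≤ Ñ ≤ N + E. Let P : S → ℝ be a probability vector and assume |Σ_{s∈S} (n(s)/N − P(s))·V(s)| ≤ σ·√(2ι/N) + 7Hι/(3N). Then |Σ_{s∈S} (ñ(s)/Ñ − P(s))·V(s)| ≤ σ·√(2ι/Ñ) + 2H·S₀·E·ι/Ñ. -/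
set_option maxHeartbeats 4000000 in
/-- Deterministic core of the paper's Lemma B.4: a Bernstein-type deviation bound with
standard-deviation parameter `σ` transfers from the non-private empirical expectation
`(n/N)·V` to the private one `(ñ/Ñ)·V`. -/
theorem private_bernstein_expectation
    {S : Type*} [Fintype S] (hcard : 2 ≤ Fintype.card S)
    (H E iota sigma : ℝ) (hH : 0 ≤ H) (hE : 1 ≤ E) (hiota : 2 ≤ iota)
    (hsigma : 0 ≤ sigma)
    (V n ntil P : S → ℝ)
    (hV : ∀ s, 0 ≤ V s ∧ V s ≤ H)
    (hn_nonneg : ∀ s, 0 ≤ n s)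
    (hN_pos : 0 < ∑ s, n s)
    (hclose : ∀ s, |ntil s - n s| ≤ E)
    (hle : (∑ s, n s) ≤ ∑ s, ntil s)
    (hub : (∑ s, ntil s) ≤ (∑ s, n s) + E)
    (hP_nonneg : ∀ s, 0 ≤ P s) (hP_sum : ∑ s, P s = 1)
    (hconc : |∑ s, (n s / (∑ t, n t) - P s) * V s| ≤
      sigma * Real.sqrt (2 * iota / (∑ t, n t)) + 7 * H * iota / (3 * (∑ t, n t))) :
    |∑ s, (ntil s / (∑ t, ntil t) - P s) * V s| ≤
      sigma * Real.sqrt (2 * iota / (∑ t, ntil t)) +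
        2 * H * (Fintype.card S : ℝ) * E * iota / (∑ t, ntil t) := by
  set N := ∑ t, n t with hNdef
  set M := ∑ t, ntil t with hMdef
  set c : ℝ := (Fintype.card S : ℝ) with hcdef
  have hc2 : (2:ℝ) ≤ c := by rw [hcdef]; exact_mod_cast hcard
  have hM_pos : 0 < M := lt_of_lt_of_le hN_pos hle
  have hE0 : (0:ℝ) ≤ E := by linarith
  have hMN_E : M - N ≤ E := by linarith
  have hMN : N ≤ M := hle
  have hVH : ∀ s, |V s - H / 2| ≤ H / 2 := fun s =>
    abs_le.2 ⟨by linarith [(hV s).1], by linarith [(hV s).2]⟩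
  have hsum_n : ∑ s, n s / N = 1 := by
    rw [← Finset.sum_div]
    field_simp
    exact hNdef.symm
  have hsum_ntil : ∑ s, ntil s / M = 1 := by
    rw [← Finset.sum_div]
    field_simp
    exact hMdef.symm
  -- cardinality bound on sum of |ntil - n|
  have hsum_close : ∑ s, |ntil s - n s| ≤ c * E := by
    calc ∑ s, |ntil s - n s| ≤ ∑ _s : S, E := Finset.sum_le_sum fun s _ => hclose s
    _ = c * E := by rw [Finset.sum_const, nsmul_eq_mul]; rfl
  -- decomposition
  have key : ∑ s, (ntil s / M - P s) * V s
      = (∑ s, (ntil s / M - n s / N) * (V s - H / 2)) + ∑ s, (n s / N - P s) * V s := by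
    have h0 : ∑ s, (ntil s / M - n s / N) = (0:ℝ) := by
      rw [Finset.sum_sub_distrib, hsum_ntil, hsum_n]; ring
    have expand : ∀ s : S, (ntil s / M - P s) * V s
        = (ntil s / M - n s / N) * (V s - H / 2) + (n s / N - P s) * V s
          + (ntil s / M - n s / N) * (H / 2) := fun s => by ring
    rw [Finset.sum_congr rfl fun s _ => expand s, Finset.sum_add_distrib,
      Finset.sum_add_distrib, ← Finset.sum_mul, h0, zero_mul, add_zero]
  -- bound on the swap term
  have hptw : ∀ s : S, |ntil s / M - n s / N|
      ≤ |ntil s - n s| / M + n s * ((M - N) / (M * N)) := by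
    intro s
    have hrw : ntil s / M - n s / N
        = (ntil s - n s) / M + n s * ((N - M) / (M * N)) := by
      field_simp
      ring
    rw [hrw]
    refine (abs_add_le _ _).trans ?_
    have h1 : |(ntil s - n s) / M| = |ntil s - n s| / M := by
      rw [abs_div, abs_of_pos hM_pos]
    have h2 : |n s * ((N - M) / (M * N))| = n s * ((M - N) / (M * N)) := by
      rw [abs_mul, abs_of_nonneg (hn_nonneg s), abs_div, abs_of_pos (mul_pos hM_pos hN_pos),
        abs_of_nonpos (by linarith : N - M ≤ 0)]
      ring_nf
    rw [h1, h2]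
  have hsum_abs : ∑ s, |ntil s / M - n s / N| ≤ (c * E + E) / M := by
    calc ∑ s, |ntil s / M - n s / N|
        ≤ ∑ s, (|ntil s - n s| / M + n s * ((M - N) / (M * N))) :=
          Finset.sum_le_sum fun s _ => hptw s
      _ = (∑ s, |ntil s - n s|) / M + N * ((M - N) / (M * N)) := by
          rw [Finset.sum_add_distrib, ← Finset.sum_div, ← Finset.sum_mul]
      _ = (∑ s, |ntil s - n s|) / M + (M - N) / M := by
          congr 1
          field_simp
      _ ≤ (c * E) / M + E / M := by gcongr
      _ = (c * E + E) / M := by ring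
  have hA : |∑ s, (ntil s / M - n s / N) * (V s - H / 2)| ≤ H / 2 * ((c * E + E) / M) := by
    calc |∑ s, (ntil s / M - n s / N) * (V s - H / 2)|
        ≤ ∑ s, |(ntil s / M - n s / N) * (V s - H / 2)| := Finset.abs_sum_le_sum_abs _ _
      _ ≤ ∑ s, |ntil s / M - n s / N| * (H / 2) := by
          refine Finset.sum_le_sum fun s _ => ?_
          rw [abs_mul]
          exact mul_le_mul_of_nonneg_left (hVH s) (abs_nonneg _)
      _ = (∑ s, |ntil s / M - n s / N|) * (H / 2) := by rw [Finset.sum_mul]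
      _ ≤ (c * E + E) / M * (H / 2) := by
          refine mul_le_mul_of_nonneg_right hsum_abs (by linarith)
      _ = H / 2 * ((c * E + E) / M) := by ring
  -- crude bound on the goal quantity
  have hLHS : |∑ s, (ntil s / M - P s) * V s| ≤ H + H * c * E / (2 * M) := by
    have h0 : ∑ s, (ntil s / M - P s) = (0:ℝ) := by
      rw [Finset.sum_sub_distrib, hsum_ntil, hP_sum]; ring
    have expand : ∀ s : S, (ntil s / M - P s) * V s
        = (ntil s / M - P s) * (V s - H / 2) + (ntil s / M - P s) * (H / 2) := fun s => by ring
    have heq : ∑ s, (ntil s / M - P s) * V s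
        = ∑ s, (ntil s / M - P s) * (V s - H / 2) := by
      rw [Finset.sum_congr rfl fun s _ => expand s, Finset.sum_add_distrib,
        ← Finset.sum_mul, h0, zero_mul, add_zero]
    have habs : ∀ s : S, |ntil s / M - P s| ≤ (n s + E) / M + P s := by
      intro s
      have h1 : |ntil s| ≤ n s + E := by
        have := hclose s
        have := abs_le.1 this
        have h2 := hn_nonneg s
        rw [abs_le]
        constructor <;> nlinarith [hE0]
      refine (abs_sub _ _).trans ?_
      gcongr
      · rw [abs_div, abs_of_pos hM_pos]
        gcongr
      · rw [abs_of_nonneg (hP_nonneg s)]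
    calc |∑ s, (ntil s / M - P s) * V s|
        = |∑ s, (ntil s / M - P s) * (V s - H / 2)| := by rw [heq]
      _ ≤ ∑ s, |(ntil s / M - P s) * (V s - H / 2)| := Finset.abs_sum_le_sum_abs _ _
      _ ≤ ∑ s, ((n s + E) / M + P s) * (H / 2) := by
          refine Finset.sum_le_sum fun s _ => ?_
          rw [abs_mul]
          refine mul_le_mul (habs s) (hVH s) (abs_nonneg _) ?_
          have := abs_nonneg (ntil s / M - P s)
          linarith [(habs s)]
      _ = (∑ s, ((n s + E) / M + P s)) * (H / 2) := by rw [Finset.sum_mul]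
      _ = ((N + c * E) / M + 1) * (H / 2) := by
          congr 1
          rw [Finset.sum_add_distrib, ← Finset.sum_div, Finset.sum_add_distrib, hP_sum,
            Finset.sum_const, nsmul_eq_mul]
          rfl
      _ ≤ ((M + c * E) / M + 1) * (H / 2) := by gcongr
      _ = H + H * c * E / (2 * M) := by
          rw [add_div, div_self (ne_of_gt hM_pos)]
          ring
  have hRHS_nonneg : 0 ≤ sigma * Real.sqrt (2 * iota / M) :=
    mul_nonneg hsigma (Real.sqrt_nonneg _)
  by_cases hcase1 : H ≤ sigma * Real.sqrt (2 * iota / M)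
  · -- large sigma: crude bound suffices
    refine hLHS.trans ?_
    have h1 : H * c * E / (2 * M) ≤ 2 * H * c * E * iota / M := by
      have hHcE : (0:ℝ) ≤ H * c * E := by positivity
      rw [div_le_div_iff₀ (by linarith) hM_pos]
      have h2 : H * c * E * M * 1 ≤ H * c * E * M * (4 * iota) :=
        mul_le_mul_of_nonneg_left (by linarith) (by positivity)
      nlinarith [h2]
    linarith
  push_neg at hcase1
  by_cases hcase2 : M ≤ 3 / 2 * c * E * iota
  · -- small Ñ: crude bound suffices
    refine hLHS.trans ?_
    have hHcE : (0:ℝ) ≤ H * c * E := by positivity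
    have h2 : H * M ≤ H * (3 / 2 * c * E * iota) := mul_le_mul_of_nonneg_left hcase2 hH
    have h3 : H * c * E * 1 ≤ H * c * E * iota := mul_le_mul_of_nonneg_left (by linarith) hHcE
    have h1 : H + H * c * E / (2 * M) ≤ 2 * H * c * E * iota / M := by
      rw [add_div' _ _ _ (by positivity : (2:ℝ) * M ≠ 0),
        div_le_div_iff₀ (by positivity) hM_pos]
      nlinarith [mul_le_mul_of_nonneg_right h2 hM_pos.le,
        mul_le_mul_of_nonneg_right h3 hM_pos.le]
    linarith
  push_neg at hcase2
  -- main case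
  have hcE6 : 6 * E ≤ M := by
    have h4 : (4:ℝ) ≤ c * iota := by nlinarith
    nlinarith [mul_le_mul_of_nonneg_left h4 hE0]
  have hN_lb : 5 / 6 * M ≤ N := by linarith
  -- sqrt comparison
  have hsqrt : sigma * Real.sqrt (2 * iota / N)
      ≤ sigma * Real.sqrt (2 * iota / M) + H * (3 * E / (5 * M)) := by
    have hiota0 : (0:ℝ) ≤ 2 * iota := by linarith
    have hMN0 : 0 ≤ M / N := le_of_lt (div_pos hM_pos hN_pos)
    have hfac : Real.sqrt (2 * iota / N)
        = Real.sqrt (2 * iota / M) * Real.sqrt (M / N) := by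
      rw [← Real.sqrt_mul (by positivity)]
      congr 1
      field_simp
    set t := Real.sqrt (M / N) with htdef
    have ht1 : 1 ≤ t := by
      rw [htdef]
      rw [show (1:ℝ) = Real.sqrt 1 from (Real.sqrt_one).symm]
      exact Real.sqrt_le_sqrt ((one_le_div hN_pos).2 hMN)
    have ht2 : t ^ 2 = M / N := Real.sq_sqrt hMN0
    have htb : t - 1 ≤ 3 * E / (5 * M) := by
      have h1 : (t - 1) * 2 ≤ t ^ 2 - 1 := by nlinarith
      have h2 : t ^ 2 - 1 ≤ 6 * E / (5 * M) := by
        have he : M / N - 1 = (M - N) / N := by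
          rw [sub_div, div_self (ne_of_gt hN_pos)]
        rw [ht2, he, div_le_div_iff₀ hN_pos (by linarith)]
        nlinarith [mul_le_mul_of_nonneg_right hMN_E (by linarith : (0:ℝ) ≤ 5 * M),
          mul_le_mul_of_nonneg_left (show 5 * M ≤ 6 * N by linarith) hE0]
      have h3 : 3 * E / (5 * M) = 6 * E / (5 * M) / 2 := by ring
      linarith
    have hsig : sigma * Real.sqrt (2 * iota / M) * (t - 1) ≤ H * (t - 1) :=
      mul_le_mul_of_nonneg_right (le_of_lt hcase1) (by linarith)
    have : sigma * Real.sqrt (2 * iota / N)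
        = sigma * Real.sqrt (2 * iota / M) + sigma * Real.sqrt (2 * iota / M) * (t - 1) := by
      rw [hfac]; ring
    rw [this]
    have hH2 : H * (t - 1) ≤ H * (3 * E / (5 * M)) :=
      mul_le_mul_of_nonneg_left htb hH
    linarith
  -- Bernstein second term
  have hbern2 : 7 * H * iota / (3 * N) ≤ 14 * H * iota / (5 * M) := by
    rw [div_le_div_iff₀ (by linarith) (by linarith)]
    have hHi : (0:ℝ) ≤ 7 * (H * iota) := by positivity
    nlinarith [mul_le_mul_of_nonneg_left (show 5 * M ≤ 6 * N by linarith) hHi]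
  -- final arithmetic
  have harith : H / 2 * ((c * E + E) / M) + H * (3 * E / (5 * M)) + 14 * H * iota / (5 * M)
      ≤ 2 * H * c * E * iota / M := by
    have hpoly : 5 * (c * E + E) + 6 * E + 28 * iota ≤ 20 * (c * E * iota) := by
      nlinarith [mul_nonneg (mul_nonneg (sub_nonneg.2 hc2) (sub_nonneg.2 hE)) (sub_nonneg.2 hiota),
        mul_nonneg (sub_nonneg.2 hc2) (sub_nonneg.2 hE),
        mul_nonneg (sub_nonneg.2 hc2) (sub_nonneg.2 hiota),
        mul_nonneg (sub_nonneg.2 hE) (sub_nonneg.2 hiota)]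
    rw [show H / 2 * ((c * E + E) / M) + H * (3 * E / (5 * M)) + 14 * H * iota / (5 * M)
        = (H * (5 * (c * E + E) + 6 * E + 28 * iota)) / (10 * M) from by ring,
      div_le_div_iff₀ (by positivity) hM_pos]
    have h := mul_le_mul_of_nonneg_left hpoly (mul_nonneg hH hM_pos.le)
    linarith [h]
  calc |∑ s, (ntil s / M - P s) * V s|
      ≤ |∑ s, (ntil s / M - n s / N) * (V s - H / 2)| + |∑ s, (n s / N - P s) * V s| := by
        rw [key]; exact abs_add_le _ _
    _ ≤ H / 2 * ((c * E + E) / M)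
        + (sigma * Real.sqrt (2 * iota / N) + 7 * H * iota / (3 * N)) := by
        exact add_le_add hA hconc
    _ ≤ sigma * Real.sqrt (2 * iota / M) + 2 * H * c * E * iota / M := by
        linarith
end

section
/- Let S be a nonempty finite set of cardinality S₀ ≥ 1 and let H ≥ 0, E ≥ 0 be real numbers. Let V : S → ℝ satisfy |V(s)| ≤ H for all s. Let n : S → ℝ satisfy n(s) ≥ 0 for all s with N = Σ_{s∈S} n(s) > 0, and let ñ : S → ℝ satisfy |ñ(s) − n(s)| ≤ E for all s; set Ñ = Σ_{s∈S} ñ(s) and assume N ≤ Ñ ≤ N + E. Then |Σ_{s∈S} (ñ(s)/Ñ − n(s)/N)·V(s)| ≤ 2H·S₀·E/Ñ. -/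
/-- The paper's Remark B.4: the expectations of a function `V` bounded by `H` under the
private and non-private empirical transition kernels differ by at most `2HS₀E/Ñ`. -/
theorem private_vs_nonprivate_expectation
    {S : Type*} [Fintype S] [Nonempty S] (H E : ℝ) (hH : 0 ≤ H) (hE : 0 ≤ E)
    (V n ntil : S → ℝ)
    (hV : ∀ s, |V s| ≤ H)
    (hn_nonneg : ∀ s, 0 ≤ n s)
    (hN_pos : 0 < ∑ s, n s)
    (hclose : ∀ s, |ntil s - n s| ≤ E)
    (hle : (∑ s, n s) ≤ ∑ s, ntil s)
    (hub : (∑ s, ntil s) ≤ (∑ s, n s) + E) :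
    |∑ s, (ntil s / (∑ t, ntil t) - n s / (∑ t, n t)) * V s| ≤
      2 * H * (Fintype.card S : ℝ) * E / (∑ t, ntil t) := by
  set Nn := ∑ s, n s with hNn
  set Nt := ∑ s, ntil s with hNt
  have hNt_pos : 0 < Nt := lt_of_lt_of_le hN_pos hle
  have key : ∀ s, |ntil s / Nt - n s / Nn| ≤ E / Nt + n s * E / (Nt * Nn) := by
    intro s
    have h1 : ntil s / Nt - n s / Nn
        = (ntil s - n s) / Nt - n s * (Nt - Nn) / (Nt * Nn) := by
      field_simp
      ring
    rw [h1]
    have h2 : |(ntil s - n s) / Nt| ≤ E / Nt := by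
      rw [abs_div, abs_of_pos hNt_pos]
      gcongr
      exact hclose s
    have h3 : |n s * (Nt - Nn) / (Nt * Nn)| ≤ n s * E / (Nt * Nn) := by
      rw [abs_div, abs_of_pos (mul_pos hNt_pos hN_pos), abs_mul,
        abs_of_nonneg (hn_nonneg s), abs_of_nonneg (by linarith : (0:ℝ) ≤ Nt - Nn)]
      gcongr
      · exact hn_nonneg s
      · linarith
    calc |(ntil s - n s) / Nt - n s * (Nt - Nn) / (Nt * Nn)|
        ≤ |(ntil s - n s) / Nt| + |n s * (Nt - Nn) / (Nt * Nn)| := abs_sub _ _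
      _ ≤ E / Nt + n s * E / (Nt * Nn) := add_le_add h2 h3
  have step1 : |∑ s, (ntil s / Nt - n s / Nn) * V s|
      ≤ ∑ s, (E / Nt + n s * E / (Nt * Nn)) * H := by
    refine (Finset.abs_sum_le_sum_abs _ _).trans (Finset.sum_le_sum fun s _ => ?_)
    rw [abs_mul]
    exact mul_le_mul (key s) (hV s) (abs_nonneg _)
      (by have := hn_nonneg s; positivity)
  have step2 : ∑ s, (E / Nt + n s * E / (Nt * Nn)) * H
      = ((Fintype.card S : ℝ) * (E / Nt) + Nn * E / (Nt * Nn)) * H := by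
    rw [← Finset.sum_mul]
    congr 1
    rw [Finset.sum_add_distrib, Finset.sum_const, Finset.card_univ, nsmul_eq_mul]
    congr 1
    rw [← Finset.sum_div, ← Finset.sum_mul]
  have hcard : (1 : ℝ) ≤ (Fintype.card S : ℝ) := by
    exact_mod_cast Fintype.card_pos
  have step3 : ((Fintype.card S : ℝ) * (E / Nt) + Nn * E / (Nt * Nn)) * H
      ≤ 2 * H * (Fintype.card S : ℝ) * E / Nt := by
    have hNn : Nn * E / (Nt * Nn) = E / Nt := by
      field_simp
    rw [hNn]
    have h : ((Fintype.card S : ℝ) * (E / Nt) + E / Nt) * H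
        = ((Fintype.card S : ℝ) + 1) * E * H / Nt := by
      rw [eq_div_iff hNt_pos.ne']; field_simp
    rw [h]
    gcongr ?x / Nt
    nlinarith [mul_nonneg (mul_nonneg hE hH) (sub_nonneg.mpr hcard)]
  calc |∑ s, (ntil s / Nt - n s / Nn) * V s|
      ≤ ∑ s, (E / Nt + n s * E / (Nt * Nn)) * H := step1
    _ = _ := step2
    _ ≤ _ := step3
end

section
/- Let X be a nonempty finite set, let T ≥ 1 be a natural number, and let x₁, …, x_T be a sequence of elements of X. For each t ∈ {1, …, T}, let N_t = #{i : 1 ≤ i < t, x_i = x_t} be the number of prior occurrences of x_t. Then Σ_{t=1}^{T} 1/√(max(N_t, 1)) ≤ 3·√(|X| · T). -/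
open Finset Real

lemma num_step (n : ℕ) (hn : 1 ≤ n) :
    1 / Real.sqrt (max ((n : ℝ) - 1) 1) + 3 * Real.sqrt ((n : ℝ) - 1) ≤ 3 * Real.sqrt n := by
  rcases eq_or_lt_of_le hn with h | h
  · subst h
    norm_num [Real.sqrt_one]
  · have h2 : (2:ℕ) ≤ n := h
    have hn1 : (1:ℝ) ≤ (n:ℝ) - 1 := by
      have : (2:ℝ) ≤ n := by exact_mod_cast h2
      linarith
    rw [max_eq_left hn1]
    set a := Real.sqrt ((n:ℝ) - 1) with ha
    set b := Real.sqrt (n:ℝ) with hb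
    have ha2 : a^2 = (n:ℝ) - 1 := Real.sq_sqrt (by linarith)
    have hb2 : b^2 = (n:ℝ) := Real.sq_sqrt (by positivity)
    have ha1 : 1 ≤ a := by
      nlinarith [Real.sqrt_nonneg ((n:ℝ)-1)]
    have hb0 : 0 < b := by nlinarith [Real.sqrt_nonneg (n:ℝ)]
    rw [div_add' _ _ _ (by linarith), div_le_iff₀ (by linarith)]
    nlinarith [sq_nonneg (b - 2*a), mul_pos (by linarith : (0:ℝ) < a) hb0]

lemma sum_counts (A : Finset ℕ) :
    ∑ t ∈ A, 1 / Real.sqrt (max (((A.filter (fun i => i < t)).card : ℕ) : ℝ) 1)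
      ≤ 3 * Real.sqrt (A.card) := by
  induction A using Finset.strongInductionOn with
  | _ A ih =>
    rcases A.eq_empty_or_nonempty with rfl | hA
    · simp
    · set t := A.max' hA with htdef
      have htA : t ∈ A := A.max'_mem hA
      have hle : ∀ s ∈ A, s ≤ t := fun s hs => A.le_max' s hs
      have hfil : A.filter (fun i => i < t) = A.erase t := by
        ext i
        simp only [Finset.mem_filter, Finset.mem_erase]
        constructor
        · rintro ⟨hi, hlt⟩; exact ⟨Nat.ne_of_lt hlt, hi⟩
        · rintro ⟨hne, hi⟩; exact ⟨hi, lt_of_le_of_ne (hle i hi) hne⟩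
      have key : ∀ s ∈ A.erase t,
          (A.filter (fun i => i < s)) = ((A.erase t).filter (fun i => i < s)) := by
        intro s hs
        rw [Finset.filter_erase, Finset.erase_eq_of_notMem]
        simp only [Finset.mem_filter, not_and, not_lt]
        intro _
        exact hle s (Finset.mem_of_mem_erase hs)
      rw [← Finset.add_sum_erase _ _ htA]
      have hsum : ∑ s ∈ A.erase t, 1 / Real.sqrt (max (((A.filter (fun i => i < s)).card : ℕ) : ℝ) 1)
          = ∑ s ∈ A.erase t, 1 / Real.sqrt (max ((((A.erase t).filter (fun i => i < s)).card : ℕ) : ℝ) 1) := by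
        apply Finset.sum_congr rfl
        intro s hs
        rw [key s hs]
      rw [hsum, hfil, Finset.card_erase_of_mem htA]
      have h1 : 1 ≤ A.card := Finset.card_pos.mpr hA
      have hcast : ((A.card - 1 : ℕ) : ℝ) = (A.card : ℝ) - 1 := by
        push_cast [Nat.cast_sub h1]; ring
      calc 1 / Real.sqrt (max ((A.card - 1 : ℕ) : ℝ) 1)
            + ∑ s ∈ A.erase t, 1 / Real.sqrt (max ((((A.erase t).filter (fun i => i < s)).card : ℕ) : ℝ) 1)
          ≤ 1 / Real.sqrt (max ((A.card : ℝ) - 1) 1) + 3 * Real.sqrt ((A.erase t).card) := by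
            rw [hcast]
            exact add_le_add (le_refl _) (ih _ (Finset.erase_ssubset htA))
        _ ≤ 3 * Real.sqrt (A.card) := by
            rw [Finset.card_erase_of_mem htA, hcast]
            exact num_step A.card h1

/-- Pigeonhole bound on sums of inverse square-root visitation counts: over a trajectory
of length `T` through a finite set `X`, `Σ_{t=1}^T 1/√(max(N_t, 1)) ≤ 3·√(|X|·T)`. -/
theorem sum_inv_sqrt_counts_le
    {X : Type*} [Fintype X] [DecidableEq X] [Nonempty X] (T : ℕ) (hT : 1 ≤ T) (x : ℕ → X) :
    ∑ t ∈ Finset.Icc 1 T,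
        (1 : ℝ) / Real.sqrt
          (max (((Finset.Ico 1 t).filter (fun i => x i = x t)).card : ℝ) 1) ≤
      3 * Real.sqrt ((Fintype.card X : ℝ) * T) := by
  classical
  set S := Finset.Icc 1 T with hS
  have hfib : ∑ t ∈ S, (1:ℝ) / Real.sqrt (max (((Finset.Ico 1 t).filter (fun i => x i = x t)).card : ℝ) 1)
      = ∑ y ∈ Finset.univ, ∑ t ∈ S.filter (fun t => x t = y),
          (1:ℝ) / Real.sqrt (max (((Finset.Ico 1 t).filter (fun i => x i = x t)).card : ℝ) 1) := by
    rw [Finset.sum_fiberwise_of_maps_to (fun t _ => Finset.mem_univ (x t))]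
  rw [hfib]
  have hstep : ∀ y : X, ∑ t ∈ S.filter (fun t => x t = y),
      (1:ℝ) / Real.sqrt (max (((Finset.Ico 1 t).filter (fun i => x i = x t)).card : ℝ) 1)
      ≤ 3 * Real.sqrt ((S.filter (fun t => x t = y)).card) := by
    intro y
    set A := S.filter (fun t => x t = y) with hA
    have hrw : ∀ t ∈ A, ((Finset.Ico 1 t).filter (fun i => x i = x t))
        = A.filter (fun i => i < t) := by
      intro t ht
      simp only [hA, hS, Finset.mem_filter, Finset.mem_Icc] at ht
      ext i
      simp only [hA, hS, Finset.mem_filter, Finset.mem_Ico, Finset.mem_Icc]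
      constructor
      · rintro ⟨⟨h1, h2⟩, h3⟩
        exact ⟨⟨⟨h1, le_trans (Nat.le_of_lt h2) ht.1.2⟩, h3.trans ht.2⟩, h2⟩
      · rintro ⟨⟨⟨h1, _⟩, h3⟩, h4⟩
        exact ⟨⟨h1, h4⟩, h3.trans ht.2.symm⟩
    calc ∑ t ∈ A, (1:ℝ) / Real.sqrt (max (((Finset.Ico 1 t).filter (fun i => x i = x t)).card : ℝ) 1)
        = ∑ t ∈ A, (1:ℝ) / Real.sqrt (max (((A.filter (fun i => i < t)).card : ℕ) : ℝ) 1) := by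
          apply Finset.sum_congr rfl
          intro t ht
          rw [hrw t ht]
      _ ≤ 3 * Real.sqrt (A.card) := sum_counts A
  calc ∑ y ∈ Finset.univ, ∑ t ∈ S.filter (fun t => x t = y),
          (1:ℝ) / Real.sqrt (max (((Finset.Ico 1 t).filter (fun i => x i = x t)).card : ℝ) 1)
      ≤ ∑ y ∈ Finset.univ, 3 * Real.sqrt ((S.filter (fun t => x t = y)).card) :=
        Finset.sum_le_sum fun y _ => hstep y
    _ = 3 * ∑ y ∈ Finset.univ, Real.sqrt ((S.filter (fun t => x t = y)).card) := by
        rw [Finset.mul_sum]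
    _ ≤ 3 * Real.sqrt ((Fintype.card X : ℝ) * T) := by
        have hcard : ∑ y ∈ Finset.univ, (((S.filter (fun t => x t = y)).card : ℕ) : ℝ) = (T : ℝ) := by
          rw [← Nat.cast_sum]
          congr 1
          rw [← Finset.card_eq_sum_card_fiberwise (fun t _ => Finset.mem_univ (x t))]
          simp [hS]
        have hcs := sq_sum_le_card_mul_sum_sq (s := (Finset.univ : Finset X))
          (f := fun y => Real.sqrt (((S.filter (fun t => x t = y)).card : ℕ) : ℝ))
        have hsq : ∀ y : X, Real.sqrt (((S.filter (fun t => x t = y)).card : ℕ) : ℝ) ^ 2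
            = (((S.filter (fun t => x t = y)).card : ℕ) : ℝ) := fun y =>
          Real.sq_sqrt (by positivity)
        simp only [hsq] at hcs
        rw [hcard, Finset.card_univ] at hcs
        have hnn : (0:ℝ) ≤ ∑ y ∈ Finset.univ, Real.sqrt (((S.filter (fun t => x t = y)).card : ℕ) : ℝ) :=
          Finset.sum_nonneg fun y _ => Real.sqrt_nonneg _
        have := Real.sqrt_le_sqrt hcs
        rw [Real.sqrt_sq hnn] at this
        exact mul_le_mul_of_nonneg_left this (by norm_num)
end
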